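/- arXiv:1711.00598 — 4 statements merged into one kernel-verified Lean document; each statement's English description precedes it below -/
import Mathlib

section
/- (Discrete Gronwall-type lemma) Let L be a positive integer and for each n = 1,…,L let b_i^{(n)} > 0 for i = 0,…,n satisfy b_n^{(n)} ≥ Σ_{i=0}^{n-1} b_i^{(n)}. Suppose positive reals ε_1,…,ε_L and positive μ, κ_1,…,κ_L satisfy b_n^{(n)} ε_n ≤ Σ_{k=1}^{n-1} b_k^{(n)} ε_k + b_0^{(n)} μ + κ_n for each n. Then ε_n ≤ μ + (max_{1≤i≤n} κ_i)/(min_{1≤i≤n} b_0^{(i)}) for all n = 1,…,L. -/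
/-! If `κ m ≤ b_0^{(m)} C` for every `m ≤ n`, with `C = max κ / min b_0`, the recursion becomes
`b_m^{(m)} ε_m ≤ ∑_{k<m} b_k^{(m)} ε_k + b_0^{(m)} (μ + C)`. Since the weights on the right sum to
at most `b_m^{(m)}`, strong induction shows that `ε_m ≤ μ + C` for all `m ≤ n`. -/

namespace DiscreteGronwallPort

open Finset

theorem le_of_mul_le_sum_mul_add {ι : Type*} {s : Finset ι} {w x : ι → ℝ} {w₀ W y M : ℝ}
    (hM : 0 ≤ M) (hw : ∀ i ∈ s, 0 ≤ w i) (hx : ∀ i ∈ s, x i ≤ M)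
    (hdom : w₀ + ∑ i ∈ s, w i ≤ W) (hW : 0 < W) (h : W * y ≤ ∑ i ∈ s, w i * x i + w₀ * M) :
    y ≤ M := by
  have hsum : ∑ i ∈ s, w i * x i ≤ (∑ i ∈ s, w i) * M := by
    rw [sum_mul]
    exact sum_le_sum fun i hi => mul_le_mul_of_nonneg_left (hx i hi) (hw i hi)
  refine le_of_mul_le_mul_left ?_ hW
  calc W * y ≤ (w₀ + ∑ i ∈ s, w i) * M := by linarith
    _ ≤ W * M := mul_le_mul_of_nonneg_right hdom hM

theorem le_of_mul_le_sum_Ico_mul_add {N : ℕ} {b : ℕ → ℕ → ℝ} {ε : ℕ → ℝ} {M : ℝ} (hM : 0 ≤ M)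
    (hb : ∀ n, 1 ≤ n → n ≤ N → ∀ k < n, 0 ≤ b n k)
    (hbn : ∀ n, 1 ≤ n → n ≤ N → 0 < b n n)
    (hdom : ∀ n, 1 ≤ n → n ≤ N → ∑ k ∈ range n, b n k ≤ b n n)
    (hrec : ∀ n, 1 ≤ n → n ≤ N → b n n * ε n ≤ ∑ k ∈ Ico 1 n, b n k * ε k + b n 0 * M) :
    ∀ n, 1 ≤ n → n ≤ N → ε n ≤ M := by
  intro n
  induction n using Nat.strong_induction_on with
  | _ n ih =>
    intro h1n hnN
    refine le_of_mul_le_sum_mul_add hM (fun k hk => hb n h1n hnN k (mem_Ico.1 hk).2)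
      (fun k hk => ih k (mem_Ico.1 hk).2 (mem_Ico.1 hk).1 ((mem_Ico.1 hk).2.le.trans hnN))
      ?_ (hbn n h1n hnN) (hrec n h1n hnN)
    rw [← sum_range_eq_add_Ico _ h1n]
    exact hdom n h1n hnN

theorem le_mul_sup'_div_inf' {ι : Type*} {s : Finset ι} (hs : s.Nonempty) {f g : ι → ℝ}
    (hg : ∀ i ∈ s, 0 < g i) {i : ι} (hi : i ∈ s) (hfi : 0 ≤ f i) :
    f i ≤ g i * (s.sup' hs f / s.inf' hs g) := by
  have hinf : 0 < s.inf' hs g := (lt_inf'_iff hs).2 hg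
  have hsup : 0 ≤ s.sup' hs f := hfi.trans (le_sup' f hi)
  calc f i ≤ s.inf' hs g * (s.sup' hs f / s.inf' hs g) := by
        rw [mul_div_cancel₀ _ hinf.ne']
        exact le_sup' f hi
    _ ≤ g i * (s.sup' hs f / s.inf' hs g) :=
        mul_le_mul_of_nonneg_right (inf'_le g hi) (div_nonneg hsup hinf.le)

theorem discrete_gronwall_general (L : ℕ)
    (b : ℕ → ℕ → ℝ) (ε κ : ℕ → ℝ) (μ : ℝ) (hμ : 0 < μ)
    (hbpos : ∀ n, 1 ≤ n → n ≤ L → ∀ i ≤ n, 0 < b n i)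
    (hdom : ∀ n, 1 ≤ n → n ≤ L → (∑ i ∈ Finset.range n, b n i) ≤ b n n)
    (hκpos : ∀ n, 1 ≤ n → n ≤ L → 0 < κ n)
    (hrec : ∀ n, 1 ≤ n → n ≤ L →
      b n n * ε n ≤ (∑ k ∈ Finset.Ico 1 n, b n k * ε k) + b n 0 * μ + κ n) :
    ∀ n, 1 ≤ n → n ≤ L → ∀ hne : (Finset.Icc 1 n).Nonempty,
      ε n ≤ μ + ((Finset.Icc 1 n).sup' hne κ) / ((Finset.Icc 1 n).inf' hne fun i => b i 0) := by
  intro n h1n hnL hne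
  set C := (Icc 1 n).sup' hne κ / (Icc 1 n).inf' hne fun i => b i 0
  have hκC : ∀ m, 1 ≤ m → m ≤ n → κ m ≤ b m 0 * C := fun m h1m hmn =>
    le_mul_sup'_div_inf' hne
      (fun i hi => hbpos i (mem_Icc.1 hi).1 ((mem_Icc.1 hi).2.trans hnL) 0 i.zero_le)
      (mem_Icc.2 ⟨h1m, hmn⟩) (hκpos m h1m (hmn.trans hnL)).le
  have hC : 0 ≤ C := nonneg_of_mul_nonneg_right
    ((hκpos n h1n hnL).le.trans (hκC n h1n le_rfl)) (hbpos n h1n hnL 0 n.zero_le)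
  refine le_of_mul_le_sum_Ico_mul_add (N := n) (b := b) (by positivity)
    (fun m h1m hmn k hk => (hbpos m h1m (hmn.trans hnL) k hk.le).le)
    (fun m h1m hmn => hbpos m h1m (hmn.trans hnL) m le_rfl)
    (fun m h1m hmn => hdom m h1m (hmn.trans hnL)) (fun m h1m hmn => ?_) n h1n le_rfl
  rw [mul_add]
  linarith [hrec m h1m (hmn.trans hnL), hκC m h1m hmn]

theorem discrete_gronwall (L : ℕ) (hL : 1 ≤ L)
    (b : ℕ → ℕ → ℝ) (ε κ : ℕ → ℝ) (μ : ℝ) (hμ : 0 < μ)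
    (hbpos : ∀ n, 1 ≤ n → n ≤ L → ∀ i ≤ n, 0 < b n i)
    (hdom : ∀ n, 1 ≤ n → n ≤ L → (∑ i ∈ Finset.range n, b n i) ≤ b n n)
    (hεpos : ∀ n, 1 ≤ n → n ≤ L → 0 < ε n)
    (hκpos : ∀ n, 1 ≤ n → n ≤ L → 0 < κ n)
    (hrec : ∀ n, 1 ≤ n → n ≤ L →
      b n n * ε n ≤ (∑ k ∈ Finset.Ico 1 n, b n k * ε k) + b n 0 * μ + κ n) :
    ∀ n, 1 ≤ n → n ≤ L → ∀ hne : (Finset.Icc 1 n).Nonempty,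
      ε n ≤ μ + ((Finset.Icc 1 n).sup' hne κ) / ((Finset.Icc 1 n).inf' hne fun i => b i 0) :=
  discrete_gronwall_general L b ε κ μ hμ hbpos hdom hκpos hrec

end DiscreteGronwallPort
end

section
/- If a real square matrix A has non-positive off-diagonal entries, positive diagonal entries, and is strictly column diagonally dominant (for each column j, A_{jj} > Σ_{i≠j} |A_{ij}|), then A is nonsingular and A⁻¹ has all nonnegative entries (i.e., A is an M-matrix). -/
/-!
Let `B` have nonpositive off-diagonal entries and positive row sums, and let `x k` be the least
entry of a vector `x` with `B *ᵥ x ≥ 0`. Since `B k j ≤ 0` and `x j ≥ x k` for `j ≠ k`,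
`0 ≤ (B *ᵥ x) k ≤ (∑ j, B k j) * x k`, so `x k ≥ 0` and hence `x ≥ 0`. Applied to `±x` with
`B *ᵥ x = 0` this makes `B` invertible, and applied to the columns of `B⁻¹`, which `B` maps to
standard basis vectors, it gives `B⁻¹ ≥ 0`. With nonpositive off-diagonal entries, strict column
dominance of `A` says exactly that `B = Aᵀ` has positive row sums.
-/

namespace Matrix

variable {n R : Type*} [Fintype n] [Field R] [LinearOrder R] [IsStrictOrderedRing R]
  {B : Matrix n n R}

theorem mulVec_apply_le_sum_mul_of_forall_le (hB : Pairwise fun i j => B i j ≤ 0)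
    {x : n → R} {k : n} (hk : ∀ j, x k ≤ x j) : (B *ᵥ x) k ≤ (∑ j, B k j) * x k := by
  rw [mulVec, dotProduct, Finset.sum_mul]
  refine Finset.sum_le_sum fun j _ => ?_
  rcases eq_or_ne k j with rfl | hkj
  · rfl
  · exact mul_le_mul_of_nonpos_left (hk j) (hB hkj)

theorem nonneg_of_mulVec_nonneg (hB : Pairwise fun i j => B i j ≤ 0)
    (hrow : ∀ i, 0 < ∑ j, B i j) {x : n → R} (hx : 0 ≤ B *ᵥ x) : 0 ≤ x := by
  intro i
  obtain ⟨k, -, hk⟩ := Finset.exists_min_image Finset.univ x ⟨i, Finset.mem_univ i⟩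
  by_contra! hxi
  have hxk : x k < 0 := (hk i (Finset.mem_univ i)).trans_lt hxi
  have hle := mulVec_apply_le_sum_mul_of_forall_le hB (fun j => hk j (Finset.mem_univ j))
  exact (hx k).not_gt (hle.trans_lt (mul_neg_of_pos_of_neg (hrow k) hxk))

variable [DecidableEq n]

theorem det_ne_zero_of_nonpos_of_sum_row_pos (hB : Pairwise fun i j => B i j ≤ 0)
    (hrow : ∀ i, 0 < ∑ j, B i j) : B.det ≠ 0 := by
  intro hdet
  obtain ⟨v, hv, hBv⟩ := exists_mulVec_eq_zero_iff.mpr hdet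
  have hpos : 0 ≤ v := nonneg_of_mulVec_nonneg hB hrow hBv.ge
  have hneg : 0 ≤ -v := nonneg_of_mulVec_nonneg hB hrow (by rw [mulVec_neg, hBv, neg_zero])
  exact hv (le_antisymm (neg_nonneg.mp hneg) hpos)

theorem nonsing_inv_nonneg_of_nonpos_of_sum_row_pos (hB : Pairwise fun i j => B i j ≤ 0)
    (hrow : ∀ i, 0 < ∑ j, B i j) (i j : n) : 0 ≤ B⁻¹ i j := by
  have hunit : IsUnit B.det := (det_ne_zero_of_nonpos_of_sum_row_pos hB hrow).isUnit
  have hcol : B *ᵥ (B⁻¹ *ᵥ Pi.single j 1) = Pi.single j 1 := by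
    rw [mulVec_mulVec, mul_nonsing_inv B hunit, one_mulVec]
  have hcol_nonneg := nonneg_of_mulVec_nonneg hB hrow (hcol ▸ Pi.single_nonneg.mpr zero_le_one) i
  simpa only [mulVec_single_one, col_apply, Pi.zero_apply] using hcol_nonneg

theorem sum_row_pos_of_sum_abs_lt_diag (hB : Pairwise fun i j => B i j ≤ 0)
    (hdom : ∀ i, ∑ j ∈ Finset.univ.erase i, |B i j| < B i i) (i : n) : 0 < ∑ j, B i j := by
  have habs : ∑ j ∈ Finset.univ.erase i, |B i j| = -∑ j ∈ Finset.univ.erase i, B i j := by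
    rw [← Finset.sum_neg_distrib]
    exact Finset.sum_congr rfl fun j hj => abs_of_nonpos (hB (Finset.ne_of_mem_erase hj).symm)
  rw [← Finset.add_sum_erase _ _ (Finset.mem_univ i)]
  linarith [hdom i]

end Matrix

open Matrix in
theorem m_matrix_of_column_dominant_general (N : ℕ) (A : Matrix (Fin N) (Fin N) ℝ)
    (hoff : ∀ i j, i ≠ j → A i j ≤ 0)
    (hdom : ∀ j, (∑ i ∈ Finset.univ.erase j, |A i j|) < A j j) :
    A.det ≠ 0 ∧ ∀ i j, 0 ≤ A⁻¹ i j := by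
  have hZ : Pairwise fun i j => Aᵀ i j ≤ 0 := fun i j hij => hoff j i hij.symm
  have hrow : ∀ i, 0 < ∑ j, Aᵀ i j := sum_row_pos_of_sum_abs_lt_diag hZ hdom
  refine ⟨fun h => det_ne_zero_of_nonpos_of_sum_row_pos hZ hrow (by rwa [det_transpose]),
    fun i j => ?_⟩
  simpa only [← transpose_nonsing_inv, transpose_apply] using
    nonsing_inv_nonneg_of_nonpos_of_sum_row_pos hZ hrow j i

theorem m_matrix_of_column_dominant (N : ℕ) (A : Matrix (Fin N) (Fin N) ℝ)
    (hoff : ∀ i j, i ≠ j → A i j ≤ 0)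
    (hdiag : ∀ j, 0 < A j j)
    (hdom : ∀ j, (∑ i ∈ Finset.univ.erase j, |A i j|) < A j j) :
    A.det ≠ 0 ∧ ∀ i j, 0 ≤ A⁻¹ i j :=
  m_matrix_of_column_dominant_general N A hoff hdom
end

section
/- (Nonnegativity preservation by induction) Let M ∈ ℝ^{N×N} be invertible with M⁻¹ ≥ 0 entrywise and let α ∈ (0,1), a_k = (k+1)^{1-α} - k^{1-α}. If vectors e^n ∈ ℝ^N for n = 1,…,L satisfy M e^n = Σ_{k=1}^{n-1} (a_{n-k-1} - a_{n-k}) e^k + a_{n-1} e^0 + r^n with e^0 ≥ 0 and r^n ≥ 0 entrywise for all n, then e^n ≥ 0 entrywise for every n = 1,…,L. -/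
/-!
Since `t ↦ t ^ (1 - α)` is increasing and concave on `[0, ∞)`, the increments `a k` are
nonnegative and decreasing. Hence each right-hand side is a nonnegative combination of earlier
iterates, `e 0` and `r n`, and `e n = M⁻¹ (M e n)` is nonnegative by strong induction on `n`.
-/

open Finset

namespace Matrix

variable {ι R : Type*} [Fintype ι]

theorem mulVec_nonneg [Semiring R] [PartialOrder R] [IsOrderedRing R] {A : Matrix ι ι R}
    (hA : ∀ i j, 0 ≤ A i j) {v : ι → R} (hv : 0 ≤ v) : 0 ≤ A *ᵥ v :=
  fun i => sum_nonneg fun j _ => mul_nonneg (hA i j) (hv j)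

variable [DecidableEq ι] [CommRing R] [PartialOrder R] [IsOrderedRing R]

theorem nonneg_of_mulVec_nonneg_s12 {M : Matrix ι ι R} (hM : IsUnit M.det)
    (hinv : ∀ i j, 0 ≤ M⁻¹ i j) {v : ι → R} (hv : 0 ≤ M *ᵥ v) : 0 ≤ v := by
  rw [← one_mulVec v, ← nonsing_inv_mul M hM, ← mulVec_mulVec]
  exact mulVec_nonneg hinv hv

theorem nonneg_of_mulVec_eq_sum_smul {M : Matrix ι ι R} (hM : IsUnit M.det)
    (hinv : ∀ i j, 0 ≤ M⁻¹ i j) {w : ℕ → ℕ → R} {s e : ℕ → ι → R} {L : ℕ}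
    (hw : ∀ m k, 0 ≤ w m k) (hs : ∀ m, 1 ≤ m → m ≤ L → 0 ≤ s m)
    (hrec : ∀ m, 1 ≤ m → m ≤ L → M *ᵥ e m = ∑ k ∈ Ico 1 m, w m k • e k + s m) :
    ∀ m, 1 ≤ m → m ≤ L → 0 ≤ e m := by
  intro m
  induction m using Nat.strong_induction_on with
  | _ m ih =>
    intro hm hmL
    refine nonneg_of_mulVec_nonneg_s12 hM hinv ?_
    rw [hrec m hm hmL]
    refine add_nonneg (sum_nonneg fun k hk => ?_) (hs m hm hmL)
    obtain ⟨hk1, hkm⟩ := mem_Ico.mp hk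
    exact smul_nonneg (hw m k) (ih k hkm hk1 (by omega))

end Matrix

theorem ConcaveOn.antitone_sub_succ {f : ℝ → ℝ} (hf : ConcaveOn ℝ (Set.Ici 0) f) :
    Antitone fun k : ℕ => f (k + 1) - f k := by
  refine antitone_nat_of_succ_le fun k => ?_
  have h := hf.slope_anti_adjacent (x := k) (y := k + 1) (z := k + 2)
    (by simp) (by simp; positivity) (by linarith) (by linarith)
  push_cast
  norm_num [add_assoc] at h ⊢
  linarith

theorem nonneg_preservation_general (N L : ℕ)
    (α : ℝ) (hα : 0 < α) (hα1 : α < 1)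
    (a : ℕ → ℝ) (ha : ∀ k : ℕ, a k = ((k : ℝ) + 1) ^ (1 - α) - (k : ℝ) ^ (1 - α))
    (M : Matrix (Fin N) (Fin N) ℝ) (hdet : M.det ≠ 0)
    (hinv : ∀ i j, 0 ≤ M⁻¹ i j)
    (e r : ℕ → Fin N → ℝ)
    (hrec : ∀ n, 1 ≤ n → n ≤ L → M.mulVec (e n) =
      (∑ k ∈ Finset.Ico 1 n, (a (n - k - 1) - a (n - k)) • e k) + a (n - 1) • e 0 + r n)
    (h0 : ∀ i, 0 ≤ e 0 i)
    (hr : ∀ n, 1 ≤ n → n ≤ L → ∀ i, 0 ≤ r n i) :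
    ∀ n, 1 ≤ n → n ≤ L → ∀ i, 0 ≤ e n i := by
  have ha_nonneg : ∀ k, 0 ≤ a k := fun k => by
    rw [ha k, sub_nonneg]
    exact Real.rpow_le_rpow k.cast_nonneg (by linarith) (by linarith)
  have ha_anti : Antitone a := funext ha ▸
    (Real.concaveOn_rpow (by linarith) (by linarith)).antitone_sub_succ
  exact Matrix.nonneg_of_mulVec_eq_sum_smul (isUnit_iff_ne_zero.mpr hdet) hinv
    (w := fun m k => a (m - k - 1) - a (m - k)) (s := fun m => a (m - 1) • e 0 + r m)
    (fun m k => sub_nonneg.mpr (ha_anti (by omega)))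
    (fun m _ _ => add_nonneg (smul_nonneg (ha_nonneg _) h0) (hr m ‹_› ‹_›))
    (fun m hm hmL => by rw [hrec m hm hmL, add_assoc])

theorem nonneg_preservation (N L : ℕ) (hN : 1 ≤ N) (hL : 1 ≤ L)
    (α : ℝ) (hα : 0 < α) (hα1 : α < 1)
    (a : ℕ → ℝ) (ha : ∀ k : ℕ, a k = ((k : ℝ) + 1) ^ (1 - α) - (k : ℝ) ^ (1 - α))
    (M : Matrix (Fin N) (Fin N) ℝ) (hdet : M.det ≠ 0)
    (hinv : ∀ i j, 0 ≤ M⁻¹ i j)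
    (e r : ℕ → Fin N → ℝ)
    (hrec : ∀ n, 1 ≤ n → n ≤ L → M.mulVec (e n) =
      (∑ k ∈ Finset.Ico 1 n, (a (n - k - 1) - a (n - k)) • e k) + a (n - 1) • e 0 + r n)
    (h0 : ∀ i, 0 ≤ e 0 i)
    (hr : ∀ n, 1 ≤ n → n ≤ L → ∀ i, 0 ≤ r n i) :
    ∀ n, 1 ≤ n → n ≤ L → ∀ i, 0 ≤ e n i :=
  nonneg_preservation_general N L α hα hα1 a ha M hdet hinv e r hrec h0 hr
end

section
/- (Stability recursion implies boundedness) Let α ∈ (0,1), a_k = (k+1)^{1-α} - k^{1-α}, and suppose nonnegative reals E_0, E_1, …, E_L and a constant K ≥ 0 satisfy E_n ≤ Σ_{k=1}^{n-1} (a_{n-k-1} - a_{n-k}) E_k + a_{n-1} E_0 + a_{n-1} K for all n = 1,…,L. Then E_n ≤ E_0 + K for all n = 1,…,L. -/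
/-! Since `a` is antitone with `a 0 = 1`, the coefficients `a (n-k-1) - a (n-k)` are nonnegative
and, together with `a (n-1)`, telescope to `1`. The right-hand side of the recursion is thus a
convex combination of `E 1, …, E (n-1)` and `E 0 + K`, and strong induction on `n` gives
`E n ≤ E 0 + K`. The sequence `a k = (k+1)^(1-α) - k^(1-α)` is antitone because `x ↦ x^(1-α)`
is concave. -/

open Finset Set

lemma ConcaveOn.antitone_nat_succ_sub {f : ℝ → ℝ} (hf : ConcaveOn ℝ (Ici 0) f) :
    Antitone fun k : ℕ => f (k + 1) - f k := by
  refine antitone_nat_of_succ_le fun k => ?_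
  have h := hf.slope_anti_adjacent (x := k) (y := k + 1) (z := k + 2)
    (mem_Ici.2 k.cast_nonneg) (mem_Ici.2 (by positivity)) (by linarith) (by linarith)
  rw [show (k : ℝ) + 2 - (k + 1) = 1 by ring, show (k : ℝ) + 1 - k = 1 by ring, div_one,
    div_one] at h
  push_cast
  rwa [show (k : ℝ) + 1 + 1 = k + 2 by ring]

lemma Finset.sum_Ico_sub_rev {G : Type*} [AddCommGroup G] (a : ℕ → G) (n : ℕ) :
    ∑ k ∈ Ico 1 n, (a (n - k - 1) - a (n - k)) = a 0 - a (n - 1) := by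
  rw [sum_Ico_eq_sum_range, ← sum_range_reflect, ← sum_range_sub' a]
  refine sum_congr rfl fun i hi => ?_
  rw [mem_range] at hi
  congr 2 <;> omega

section WeightedRecursion

variable {R : Type*} [CommRing R] [PartialOrder R] [IsOrderedRing R]

lemma le_of_le_telescoping_combination {a E : ℕ → R} {L : ℕ} {M : R}
    (ha : Antitone a) (ha0 : a 0 = 1)
    (hrec : ∀ n, 1 ≤ n → n ≤ L →
      E n ≤ ∑ k ∈ Ico 1 n, (a (n - k - 1) - a (n - k)) * E k + a (n - 1) * M) :
    ∀ n, 1 ≤ n → n ≤ L → E n ≤ M := by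
  intro n
  induction n using Nat.strong_induction_on with
  | _ n ih =>
    intro hn hnL
    calc E n ≤ ∑ k ∈ Ico 1 n, (a (n - k - 1) - a (n - k)) * E k + a (n - 1) * M :=
          hrec n hn hnL
      _ ≤ ∑ k ∈ Ico 1 n, (a (n - k - 1) - a (n - k)) * M + a (n - 1) * M := by
          gcongr with k hk
          · exact sub_nonneg.2 (ha (by omega))
          · rw [Finset.mem_Ico] at hk
            exact ih k hk.2 hk.1 (by omega)
      _ = M := by rw [← sum_mul, sum_Ico_sub_rev, ha0]; ring

end WeightedRecursion

theorem stability_boundedness_general (α : ℝ) (hα : 0 < α) (hα1 : α < 1)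
    (a : ℕ → ℝ) (ha : ∀ k : ℕ, a k = ((k : ℝ) + 1) ^ (1 - α) - (k : ℝ) ^ (1 - α))
    (L : ℕ) (E : ℕ → ℝ)
    (K : ℝ)
    (hrec : ∀ n, 1 ≤ n → n ≤ L →
      E n ≤ (∑ k ∈ Finset.Ico 1 n, (a (n - k - 1) - a (n - k)) * E k)
        + a (n - 1) * E 0 + a (n - 1) * K) :
    ∀ n, 1 ≤ n → n ≤ L → E n ≤ E 0 + K := by
  have ha_anti : Antitone a := by
    rw [show a = _ from funext ha]
    exact (Real.concaveOn_rpow (by linarith) (by linarith)).antitone_nat_succ_sub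
  have ha0 : a 0 = 1 := by
    simp [ha, Real.zero_rpow (by linarith : (1 : ℝ) - α ≠ 0)]
  refine le_of_le_telescoping_combination ha_anti ha0 fun n hn hnL => ?_
  linarith [hrec n hn hnL]

theorem stability_boundedness (α : ℝ) (hα : 0 < α) (hα1 : α < 1)
    (a : ℕ → ℝ) (ha : ∀ k : ℕ, a k = ((k : ℝ) + 1) ^ (1 - α) - (k : ℝ) ^ (1 - α))
    (L : ℕ) (hL : 1 ≤ L) (E : ℕ → ℝ) (hE : ∀ n ≤ L, 0 ≤ E n)
    (K : ℝ) (hK : 0 ≤ K)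
    (hrec : ∀ n, 1 ≤ n → n ≤ L →
      E n ≤ (∑ k ∈ Finset.Ico 1 n, (a (n - k - 1) - a (n - k)) * E k)
        + a (n - 1) * E 0 + a (n - 1) * K) :
    ∀ n, 1 ≤ n → n ≤ L → E n ≤ E 0 + K :=
  stability_boundedness_general α hα hα1 a ha L E K hrec
end
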